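/- arXiv:2305.07181 — 6 statements merged into one kernel-verified Lean document; each statement's English description precedes it below -/
import Mathlib

section
/- Under the Harten setup, for every fluid state (ρ, V, p) the identity ⟨W, U⟩ − S = S/β holds, where ⟨·,·⟩ is the Euclidean inner product on ℝ^{d+2}. Equivalently, the potential function φ := ⟨W, U⟩ − S satisfies S = β·φ. -/
/-- Harten's entropy function `S = β·ρ·(p·ρ^(−γ))^(1/(α+γ))`. -/
noncomputable def hartenS (γ α β ρ p : ℝ) : ℝ :=
  β * ρ * (p * ρ ^ (-γ)) ^ (1 / (α + γ))

/-- Harten's entropy variables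
`W = (ρ/p)·(p·ρ^(−γ))^(1/(α+γ)) · (−(α/(γ−1))·(p/ρ) − ‖V‖²/2, V, −1) ∈ ℝ^(d+2)`. -/
noncomputable def hartenW (d : ℕ) (γ α ρ p : ℝ) (V : Fin d → ℝ) : Fin (d + 2) → ℝ :=
  fun j =>
    (ρ / p) * (p * ρ ^ (-γ)) ^ (1 / (α + γ)) *
      (Fin.cons (α := fun _ => ℝ) (-(α / (γ - 1)) * (p / ρ) - (∑ i, V i ^ 2) / 2) (Fin.snoc V (-1)) j)

/-- The conservative variables `U = (ρ, ρV, e) ∈ ℝ^(d+2)`, with total energy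
`e = p/(γ−1) + ρ‖V‖²/2`. -/
noncomputable def consVars (d : ℕ) (γ ρ p : ℝ) (V : Fin d → ℝ) : Fin (d + 2) → ℝ :=
  Fin.cons (α := fun _ => ℝ) ρ (Fin.snoc (fun i => ρ * V i) (p / (γ - 1) + ρ * (∑ i, V i ^ 2) / 2))

/-- Under the Harten setup, `⟨W, U⟩ − S = S/β`; equivalently the potential function
`φ = ⟨W, U⟩ − S` satisfies `S = β·φ`. -/
theorem harten_potential_identity
    (d : ℕ) (hd : 1 ≤ d) (γ α β : ℝ) (hγ : 1 < γ) (hα : 0 < α ∨ α < -γ)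
    (hβ : β = -(γ + α) / (γ - 1))
    (ρ p : ℝ) (hρ : 0 < ρ) (hp : 0 < p) (V : Fin d → ℝ) :
    (∑ j, hartenW d γ α ρ p V j * consVars d γ ρ p V j) - hartenS γ α β ρ p
        = hartenS γ α β ρ p / β ∧
      hartenS γ α β ρ p
        = β * ((∑ j, hartenW d γ α ρ p V j * consVars d γ ρ p V j)
            - hartenS γ α β ρ p) := by
  have hγ1 : γ - 1 ≠ 0 := by nlinarith
  have hαγ : α + γ ≠ 0 := by rcases hα with h | h <;> nlinarith
  have hρ0 : ρ ≠ 0 := ne_of_gt hρ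
  have hp0 : p ≠ 0 := ne_of_gt hp
  have hβ0 : β ≠ 0 := by
    rw [hβ]
    exact div_ne_zero (by intro h; apply hαγ; linarith) hγ1
  set A := (p * ρ ^ (-γ)) ^ (1 / (α + γ)) with hA
  set s := ∑ i, V i ^ 2 with hs
  have hmid : ∑ i : Fin d, (ρ / p * A * V i) * (ρ * V i) = ρ / p * A * ρ * s := by
    rw [hs, Finset.mul_sum]
    exact Finset.sum_congr rfl fun i _ => by ring
  have hsum : (∑ j, hartenW d γ α ρ p V j * consVars d γ ρ p V j)
      = ρ / p * A * (ρ * (-(α / (γ - 1)) * (p / ρ) - s / 2) + ρ * s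
          + (-1) * (p / (γ - 1) + ρ * s / 2)) := by
    simp only [hartenW, consVars]
    rw [Fin.sum_univ_succ, Fin.sum_univ_castSucc]
    simp only [Fin.cons_zero, Fin.cons_succ, Fin.snoc_castSucc, Fin.snoc_last, ← hA, ← hs]
    rw [hmid]
    ring
  have key : (∑ j, hartenW d γ α ρ p V j * consVars d γ ρ p V j) - hartenS γ α β ρ p
      = hartenS γ α β ρ p / β := by
    rw [hsum, hartenS, ← hA]
    have e0 : β * ρ * A / β = ρ * A := by
      field_simp
    rw [e0]
    have e1 : ρ / p * A * (ρ * (-(α / (γ - 1)) * (p / ρ) - s / 2) + ρ * s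
        + (-1) * (p / (γ - 1) + ρ * s / 2)) = ρ * A * ((-(α + 1)) / (γ - 1)) := by
      field_simp
      ring
    have e2 : (-(α + 1)) / (γ - 1) = β + 1 := by
      rw [hβ]
      field_simp
      ring
    rw [e1, e2]
    ring
  exact ⟨key, by rw [key]; field_simp⟩
end

section
/- Under the Harten setup, for every fluid state (ρ, V, p) and every i ∈ {1,…,d} the identity (β/(β+1))·⟨W, F^{(i)}⟩ = G^{(i)} holds, where ⟨·,·⟩ is the Euclidean inner product on ℝ^{d+2}. Consequently the potential flux ψ^{(i)} := ⟨W, F^{(i)}⟩ − G^{(i)} satisfies G^{(i)} = β·ψ^{(i)}. -/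
/-- The Euler flux `F^(i) = (ρV_i, ρV_iV + p·e_i, (e+p)V_i) ∈ ℝ^(d+2)`, with
total energy `e = p/(γ−1) + ρ‖V‖²/2`. -/
noncomputable def eulerFlux (d : ℕ) (γ ρ p : ℝ) (V : Fin d → ℝ) (i : Fin d) :
    Fin (d + 2) → ℝ :=
  Fin.cons (α := fun _ => ℝ) (ρ * V i)
    (Fin.snoc (fun j => ρ * V i * V j + p * (if j = i then 1 else 0))
      ((p / (γ - 1) + ρ * (∑ k, V k ^ 2) / 2 + p) * V i))


/-!
Both sides are multiples of `ρ K V_i` with `K = (p ρ^(-γ))^(1/(α+γ))`: the entropy flux is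
`G^(i) = β ρ K V_i`, and in `⟨W, F^(i)⟩` the kinetic-energy terms cancel and the pressure terms
combine to `-(α+1)/(γ-1) ρ K V_i = (β+1) ρ K V_i`.
-/

theorem Fin.sum_cons_snoc_mul_cons_snoc {R : Type*} [NonUnitalNonAssocSemiring R] {n : ℕ}
    (a b a' b' : R) (v w : Fin n → R) :
    ∑ j, Fin.cons (α := fun _ => R) a (Fin.snoc v b) j *
        Fin.cons (α := fun _ => R) a' (Fin.snoc w b') j
      = a * a' + ∑ k, v k * w k + b * b' := by
  rw [Fin.sum_univ_succ, Fin.sum_univ_castSucc]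
  simp only [Fin.cons_zero, Fin.cons_succ, Fin.snoc_castSucc, Fin.snoc_last, add_assoc]

theorem sum_mul_momentum_flux {ι R : Type*} [Fintype ι] [DecidableEq ι] [CommRing R]
    (ρ p : R) (V : ι → R) (i : ι) :
    ∑ k, V k * (ρ * V i * V k + p * (if k = i then 1 else 0))
      = ρ * V i * ∑ k, V k ^ 2 + p * V i := by
  simp only [mul_add, Finset.sum_add_distrib, Finset.mul_sum, mul_ite, mul_one, mul_zero,
    Finset.sum_ite_eq', Finset.mem_univ, if_true]
  congr 1
  · exact Finset.sum_congr rfl fun k _ => by ring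
  · ring

theorem hartenW_dot_eulerFlux {d : ℕ} {γ α ρ p : ℝ} (hγ : γ ≠ 1) (hρ : ρ ≠ 0) (hp : p ≠ 0)
    (V : Fin d → ℝ) (i : Fin d) :
    ∑ j, hartenW d γ α ρ p V j * eulerFlux d γ ρ p V i j
      = -(α + 1) / (γ - 1) * (ρ * (p * ρ ^ (-γ)) ^ (1 / (α + γ)) * V i) := by
  have hγ1 : γ - 1 ≠ 0 := sub_ne_zero.2 hγ
  simp only [hartenW, eulerFlux, mul_assoc (ρ / p * _), ← Finset.mul_sum]
  rw [Fin.sum_cons_snoc_mul_cons_snoc, sum_mul_momentum_flux]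
  field_simp
  ring

theorem harten_beta_add_one {γ α β : ℝ} (hγ : γ ≠ 1) (hβ : β = -(γ + α) / (γ - 1)) :
    β + 1 = -(α + 1) / (γ - 1) := by
  have hγ1 : γ - 1 ≠ 0 := sub_ne_zero.2 hγ
  rw [hβ]
  field_simp
  ring

theorem harten_potential_flux_identity_general
    (d : ℕ) (γ α β : ℝ) (hγ : 1 < γ) (hα : 0 < α ∨ α < -γ)
    (hβ : β = -(γ + α) / (γ - 1))
    (ρ p : ℝ) (hρ : 0 < ρ) (hp : 0 < p) (V : Fin d → ℝ) (i : Fin d) :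
    (β / (β + 1)) * (∑ j, hartenW d γ α ρ p V j * eulerFlux d γ ρ p V i j)
        = V i * hartenS γ α β ρ p ∧
      V i * hartenS γ α β ρ p
        = β * ((∑ j, hartenW d γ α ρ p V j * eulerFlux d γ ρ p V i j)
            - V i * hartenS γ α β ρ p) := by
  have hβ1 : β + 1 = -(α + 1) / (γ - 1) := harten_beta_add_one hγ.ne' hβ
  have hβ1_ne : β + 1 ≠ 0 := by
    rw [hβ1]
    exact div_ne_zero (neg_ne_zero.2 (by rcases hα with h | h <;> linarith)) (by linarith)
  rw [hartenW_dot_eulerFlux hγ.ne' hρ.ne' hp.ne', ← hβ1, hartenS]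
  constructor
  · field_simp
  · ring

/-- Under the Harten setup, `(β/(β+1))·⟨W, F^(i)⟩ = G^(i)` where `G^(i) = V_i·S`;
consequently the potential flux `ψ^(i) = ⟨W, F^(i)⟩ − G^(i)` satisfies
`G^(i) = β·ψ^(i)`. -/
theorem harten_potential_flux_identity
    (d : ℕ) (hd : 1 ≤ d) (γ α β : ℝ) (hγ : 1 < γ) (hα : 0 < α ∨ α < -γ)
    (hβ : β = -(γ + α) / (γ - 1))
    (ρ p : ℝ) (hρ : 0 < ρ) (hp : 0 < p) (V : Fin d → ℝ) (i : Fin d) :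
    (β / (β + 1)) * (∑ j, hartenW d γ α ρ p V j * eulerFlux d γ ρ p V i j)
        = V i * hartenS γ α β ρ p ∧
      V i * hartenS γ α β ρ p
        = β * ((∑ j, hartenW d γ α ρ p V j * eulerFlux d γ ρ p V i j)
            - V i * hartenS γ α β ρ p) :=
  harten_potential_flux_identity_general d γ α β hγ hα hβ ρ p hρ hp V i
end

section
/- Under the Harten setup, let (ρ, V, p) and (ρ′, V′, p′) be two fluid states and let η > 0 be a real number such that W(ρ′, V′, p′) = η • W(ρ, V, p) (equality of vectors in ℝ^{d+2}). Then F^{(i)}(ρ′, V′, p′) = η^β • F^{(i)}(ρ, V, p) for every i ∈ {1,…,d}. That is, the Euler fluxes are homogeneous of degree β with respect to Harten's entropy variables. -/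
/-!
Writing `W = s(ρ, p) · (-(α/(γ-1))·p/ρ - ‖V‖²/2, V, -1)` with the positive scale
`s(ρ, p) = (ρ/p)(pρ^{-γ})^{1/(α+γ)}`, the last component of `W' = η • W` gives `s' = η s`,
the middle ones `V' = V`, and the first one `p'/ρ' = p/ρ` (since `α ≠ 0`). Hence
`(ρ', p') = t • (ρ, p)` for some `t > 0`, and then `s' = t^{(1-γ)/(α+γ)} s`, i.e.
`η = t^{(1-γ)/(α+γ)}` and `η^β = t`. The flux is homogeneous of degree one in `(ρ, p)`
at fixed `V`, which finishes the proof.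
-/

open Real

noncomputable def hartenScale (γ α ρ p : ℝ) : ℝ :=
  ρ / p * (p * ρ ^ (-γ)) ^ (1 / (α + γ))

section HartenScale

variable {γ α ρ p : ℝ}

lemma hartenScale_pos (hρ : 0 < ρ) (hp : 0 < p) : 0 < hartenScale γ α ρ p := by
  unfold hartenScale
  positivity

lemma hartenScale_mul_mul {t : ℝ} (ht : 0 < t) (hρ : 0 < ρ) (hp : 0 < p) :
    hartenScale γ α (t * ρ) (t * p) = t ^ ((1 - γ) / (α + γ)) * hartenScale γ α ρ p := by
  have hratio : t * ρ / (t * p) = ρ / p := mul_div_mul_left ρ p ht.ne'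
  have hbase : t * p * (t * ρ) ^ (-γ) = t ^ (1 - γ) * (p * ρ ^ (-γ)) := by
    rw [mul_rpow ht.le hρ.le, rpow_sub ht, rpow_one, rpow_neg ht.le]
    field_simp
  unfold hartenScale
  rw [hratio, hbase, mul_rpow (by positivity) (by positivity), ← rpow_mul ht.le, mul_one_div]
  ring

end HartenScale

section HartenW

variable {d : ℕ} {γ α ρ p ρ' p' η : ℝ} {V V' : Fin d → ℝ}

lemma hartenW_zero :
    hartenW d γ α ρ p V 0 =
      hartenScale γ α ρ p * (-(α / (γ - 1)) * (p / ρ) - (∑ i, V i ^ 2) / 2) :=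
  rfl

lemma hartenW_succ_castSucc (k : Fin d) :
    hartenW d γ α ρ p V k.castSucc.succ = hartenScale γ α ρ p * V k := by
  simp [hartenW, hartenScale]

lemma hartenW_last : hartenW d γ α ρ p V (Fin.last (d + 1)) = -hartenScale γ α ρ p := by
  simp [hartenW, hartenScale, ← Fin.succ_last]

lemma hartenScale_eq_mul_of_hartenW_eq_smul
    (hW : hartenW d γ α ρ' p' V' = η • hartenW d γ α ρ p V) :
    hartenScale γ α ρ' p' = η * hartenScale γ α ρ p := by
  simpa [hartenW_last] using congrFun hW (Fin.last (d + 1))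

lemma velocity_eq_of_hartenW_eq_smul (hW : hartenW d γ α ρ' p' V' = η • hartenW d γ α ρ p V)
    (hs : hartenScale γ α ρ' p' ≠ 0) : V' = V := by
  funext k
  have hk := congrFun hW k.castSucc.succ
  simp only [Pi.smul_apply, smul_eq_mul, hartenW_succ_castSucc] at hk
  rw [← mul_assoc, ← hartenScale_eq_mul_of_hartenW_eq_smul hW] at hk
  exact mul_left_cancel₀ hs hk

lemma div_eq_div_of_hartenW_eq_smul (hW : hartenW d γ α ρ' p' V' = η • hartenW d γ α ρ p V)
    (hα : α ≠ 0) (hγ : γ ≠ 1) (hs : hartenScale γ α ρ' p' ≠ 0) :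
    p' / ρ' = p / ρ := by
  have h0 := congrFun hW 0
  simp only [Pi.smul_apply, smul_eq_mul, hartenW_zero,
    velocity_eq_of_hartenW_eq_smul hW hs] at h0
  rw [← mul_assoc, ← hartenScale_eq_mul_of_hartenW_eq_smul hW] at h0
  have hcoef : α / (γ - 1) ≠ 0 := div_ne_zero hα (sub_ne_zero.mpr hγ)
  have hfirst := mul_left_cancel₀ hs h0
  exact mul_left_cancel₀ hcoef (by linarith)

lemma exists_eq_smul_of_hartenW_eq_smul (hW : hartenW d γ α ρ' p' V' = η • hartenW d γ α ρ p V)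
    (hα : α ≠ 0) (hγ : γ ≠ 1) (hρ : 0 < ρ) (hp : 0 < p)
    (hρ' : 0 < ρ') (hp' : 0 < p') :
    ∃ t, 0 < t ∧ ρ' = t * ρ ∧ p' = t * p ∧ V' = V ∧ η = t ^ ((1 - γ) / (α + γ)) := by
  set t := p' / p
  have hs' := (hartenScale_pos (γ := γ) (α := α) hρ' hp').ne'
  have hp't : p' = t * p := (div_mul_cancel₀ p' hp.ne').symm
  have hρ't : ρ' = t * ρ := by
    have hdiv := div_eq_div_of_hartenW_eq_smul hW hα hγ hs'
    rw [div_eq_div_iff hρ'.ne' hρ.ne'] at hdiv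
    rw [div_mul_eq_mul_div, eq_div_iff hp.ne']
    linarith
  have ht : 0 < t := div_pos hp' hp
  refine ⟨t, ht, hρ't, hp't, velocity_eq_of_hartenW_eq_smul hW hs', ?_⟩
  have hscale := hartenScale_eq_mul_of_hartenW_eq_smul hW
  rw [hρ't, hp't, hartenScale_mul_mul ht hρ hp] at hscale
  exact (mul_right_cancel₀ (hartenScale_pos hρ hp).ne' hscale).symm

end HartenW

lemma eulerFlux_mul_mul (d : ℕ) (γ t ρ p : ℝ) (V : Fin d → ℝ) (i : Fin d) :
    eulerFlux d γ (t * ρ) (t * p) V i = t • eulerFlux d γ ρ p V i := by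
  funext j
  refine Fin.cases ?_ (Fin.lastCases ?_ fun k => ?_) j
  · simp [eulerFlux]
    ring
  · simp [eulerFlux]
    ring
  · simp only [eulerFlux, Fin.cons_succ, Fin.snoc_castSucc, Pi.smul_apply, smul_eq_mul]
    split_ifs <;> ring

theorem eulerFlux_homogeneous_in_hartenW_general
    (d : ℕ) (γ α β : ℝ) (hγ : 1 < γ) (hα : 0 < α ∨ α < -γ)
    (hβ : β = -(γ + α) / (γ - 1))
    (ρ p : ℝ) (hρ : 0 < ρ) (hp : 0 < p) (V : Fin d → ℝ)
    (ρ' p' : ℝ) (hρ' : 0 < ρ') (hp' : 0 < p') (V' : Fin d → ℝ)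
    (η : ℝ)
    (hW : hartenW d γ α ρ' p' V' = η • hartenW d γ α ρ p V) :
    ∀ i : Fin d, eulerFlux d γ ρ' p' V' i = η ^ β • eulerFlux d γ ρ p V i := by
  have hα0 : α ≠ 0 := by rintro rfl; rcases hα with h | h <;> linarith
  have hαγ : α + γ ≠ 0 := by intro h0; rcases hα with h | h <;> linarith
  have hγ1 : γ - 1 ≠ 0 := sub_ne_zero.mpr hγ.ne'
  obtain ⟨t, ht, rfl, rfl, rfl, rfl⟩ :=
    exists_eq_smul_of_hartenW_eq_smul hW hα0 hγ.ne' hρ hp hρ' hp'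
  have hexp : (1 - γ) / (α + γ) * β = 1 := by
    rw [hβ]
    field_simp
    ring
  intro i
  rw [← rpow_mul ht.le, hexp, rpow_one, eulerFlux_mul_mul]

/-- Under the Harten setup, the Euler fluxes are homogeneous of degree `β` with
respect to Harten's entropy variables: if `W(ρ', V', p') = η • W(ρ, V, p)` for some
`η > 0`, then `F^(i)(ρ', V', p') = η^β • F^(i)(ρ, V, p)` for every `i`. -/
theorem eulerFlux_homogeneous_in_hartenW
    (d : ℕ) (hd : 1 ≤ d) (γ α β : ℝ) (hγ : 1 < γ) (hα : 0 < α ∨ α < -γ)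
    (hβ : β = -(γ + α) / (γ - 1))
    (ρ p : ℝ) (hρ : 0 < ρ) (hp : 0 < p) (V : Fin d → ℝ)
    (ρ' p' : ℝ) (hρ' : 0 < ρ') (hp' : 0 < p') (V' : Fin d → ℝ)
    (η : ℝ) (hη : 0 < η)
    (hW : hartenW d γ α ρ' p' V' = η • hartenW d γ α ρ p V) :
    ∀ i : Fin d, eulerFlux d γ ρ' p' V' i = η ^ β • eulerFlux d γ ρ p V i :=
  eulerFlux_homogeneous_in_hartenW_general d γ α β hγ hα hβ ρ p hρ hp V ρ' p' hρ' hp' V' η hW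
end

section
/- Under the Harten setup, regard Ŝ, Ŵ, F̂^{(i)}, Ĝ^{(i)} as functions of the conservative variables U = (ρ, m, e) on the open set D = {(ρ, m, e) : ρ > 0, (γ−1)(e − ‖m‖²/(2ρ)) > 0}, via V = m/ρ and p = (γ−1)(e − ‖m‖²/(2ρ)). Then for every U ∈ D, every i ∈ {1,…,d}, and every direction v ∈ ℝ^{d+2}: ⟨Ŵ(U), DF̂^{(i)}(U)·v⟩ = DĜ^{(i)}(U)·v, i.e. the transpose of the Euler flux Jacobian applied to Harten's entropy variables equals the gradient of the entropy flux: (DF̂^{(i)}(U))^T Ŵ(U) = ∇Ĝ^{(i)}(U). -/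
/-- Pressure as a function of the conservative variables `U = (ρ, m, e)`. -/
noncomputable def pOf (d : ℕ) (γ : ℝ) (U : Fin (d + 2) → ℝ) : ℝ :=
  (γ - 1) * (U (Fin.last (d + 1)) -
    (∑ i : Fin d, U (Fin.castSucc (Fin.succ i)) ^ 2) / (2 * U 0))

/-- Velocity `V = m/ρ` as a function of the conservative variables. -/
noncomputable def vOf (d : ℕ) (U : Fin (d + 2) → ℝ) : Fin d → ℝ :=
  fun i => U (Fin.castSucc (Fin.succ i)) / U 0

/-- Euler flux `F̂^(i)` as a function of the conservative variables. -/
noncomputable def fluxHat (d : ℕ) (γ : ℝ) (i : Fin d) (U : Fin (d + 2) → ℝ) :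
    Fin (d + 2) → ℝ :=
  eulerFlux d γ (U 0) (pOf d γ U) (vOf d U) i

/-- Entropy flux `Ĝ^(i) = V_i·Ŝ` as a function of the conservative variables. -/
noncomputable def entropyFluxHat (d : ℕ) (γ α β : ℝ) (i : Fin d)
    (U : Fin (d + 2) → ℝ) : ℝ :=
  vOf d U i * hartenS γ α β (U 0) (pOf d γ U)

/-- Harten's entropy variables `Ŵ` as a function of the conservative variables. -/
noncomputable def hartenWhat (d : ℕ) (γ α : ℝ) (U : Fin (d + 2) → ℝ) :
    Fin (d + 2) → ℝ :=
  hartenW d γ α (U 0) (pOf d γ U) (vOf d U)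

/-!
The flux splits as `F̂⁽ⁱ⁾(U) = Vᵢ (U + p e_E) + p e_{mᵢ}`, with `e_E`, `e_{mᵢ}` the unit vectors
of the energy and the `i`-th momentum, so by the product rule
`DF̂⁽ⁱ⁾(U) v = (DVᵢ v) (U + p e_E) + Vᵢ (v + (Dp v) e_E) + (Dp v) e_{mᵢ}`.
Pairing with `Ŵ`, the `Dp v` terms cancel since `Ŵ_{mᵢ} = -Vᵢ Ŵ_E`, and the choice
`β = -(γ + α)/(γ - 1)` gives both `Ŵ ⬝ᵥ (U + p e_E) = Ŝ` and `Ŵ = ∇Ŝ`. What remains is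
`(DVᵢ v) Ŝ + Vᵢ (DŜ v)`, the derivative of `Ĝ⁽ⁱ⁾ = Vᵢ Ŝ`.
-/

open Topology

noncomputable def hartenSHat (d : ℕ) (γ α β : ℝ) (U : Fin (d + 2) → ℝ) : ℝ :=
  hartenS γ α β (U 0) (pOf d γ U)

lemma HasDerivAt.hartenS {γ α β : ℝ} {ρ p : ℝ → ℝ} {ρ' p' t : ℝ} (hρ : HasDerivAt ρ ρ' t)
    (hp : HasDerivAt p p' t) (hρt : 0 < ρ t) (hpt : 0 < p t) :
    HasDerivAt (fun s => hartenS γ α β (ρ s) (p s))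
      (hartenS γ α β (ρ t) (p t) * (ρ' / ρ t + (p' / p t - γ * ρ' / ρ t) / (α + γ))) t := by
  have hK : 0 < p t * ρ t ^ (-γ) := mul_pos hpt (Real.rpow_pos_of_pos hρt _)
  have hq := (hp.fun_mul (hρ.rpow_const (p := -γ) (Or.inl hρt.ne'))).rpow_const
    (p := 1 / (α + γ)) (Or.inl hK.ne')
  refine ((hρ.const_mul β).fun_mul hq).congr_deriv ?_
  rw [_root_.hartenS, Real.rpow_sub hK, Real.rpow_one, Real.rpow_sub hρt, Real.rpow_one]
  field_simp
  ring

lemma hasDerivAt_add_smul_apply {n : ℕ} (U v : Fin n → ℝ) (j : Fin n) :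
    HasDerivAt (fun t : ℝ => (U + t • v) j) (v j) 0 := by
  simpa using ((hasDerivAt_id (0 : ℝ)).mul_const (v j)).const_add (U j)

section
variable {d : ℕ} {γ α β : ℝ}

lemma differentiableAt_pOf {U : Fin (d + 2) → ℝ} (hρ : U 0 ≠ 0) :
    DifferentiableAt ℝ (pOf d γ) U := by
  unfold pOf
  fun_prop (disch := simpa using hρ)

lemma differentiableAt_vOf {U : Fin (d + 2) → ℝ} (hρ : U 0 ≠ 0) (i : Fin d) :
    DifferentiableAt ℝ (fun U => vOf d U i) U := by
  unfold vOf
  fun_prop (disch := exact hρ)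

lemma differentiableAt_hartenSHat {U : Fin (d + 2) → ℝ} (hρ : 0 < U 0) (hp : 0 < pOf d γ U) :
    DifferentiableAt ℝ (hartenSHat d γ α β) U := by
  have := differentiableAt_pOf (γ := γ) hρ.ne'
  unfold hartenSHat hartenS
  fun_prop (disch := first | exact Or.inl hρ.ne' | positivity)

lemma hasLineDerivAt_pOf {U : Fin (d + 2) → ℝ} (hρ : U 0 ≠ 0) (v : Fin (d + 2) → ℝ) :
    HasLineDerivAt ℝ (pOf d γ)
      ((γ - 1) * (v (Fin.last (d + 1)) - ∑ k, vOf d U k * v (Fin.castSucc (Fin.succ k))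
        + (∑ k, vOf d U k ^ 2) / 2 * v 0)) U v := by
  have hkin := (HasDerivAt.fun_sum (u := Finset.univ) fun k _ =>
    (hasDerivAt_add_smul_apply U v (Fin.castSucc (Fin.succ k))).fun_pow 2).fun_div
    ((hasDerivAt_add_smul_apply U v 0).const_mul 2) (by simpa using hρ)
  refine (((hasDerivAt_add_smul_apply U v (Fin.last (d + 1))).sub hkin).const_mul
    (γ - 1)).congr_deriv ?_
  simp only [zero_smul, add_zero, vOf, div_pow, div_mul_eq_mul_div, ← Finset.sum_div,
    Nat.cast_ofNat, Nat.reduceSub, pow_one, mul_assoc (2 : ℝ), ← Finset.mul_sum]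
  field_simp
  ring

lemma energy_eq (hγ : γ ≠ 1) {U : Fin (d + 2) → ℝ} (hρ : U 0 ≠ 0) :
    U (Fin.last (d + 1)) = pOf d γ U / (γ - 1) + (∑ k, vOf d U k ^ 2) / 2 * U 0 := by
  have hγ' : γ - 1 ≠ 0 := sub_ne_zero.mpr hγ
  simp only [pOf, vOf, div_pow, ← Finset.sum_div]
  field_simp
  ring

lemma hartenWhat_dotProduct (U x : Fin (d + 2) → ℝ) :
    hartenWhat d γ α U ⬝ᵥ x = U 0 / pOf d γ U * (pOf d γ U * U 0 ^ (-γ)) ^ (1 / (α + γ)) *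
      ((-(α / (γ - 1)) * (pOf d γ U / U 0) - (∑ k, vOf d U k ^ 2) / 2) * x 0
        + ∑ k, vOf d U k * x (Fin.castSucc (Fin.succ k)) - x (Fin.last (d + 1))) := by
  simp only [dotProduct, hartenWhat, hartenW, Fin.sum_univ_succ (n := d + 1),
    Fin.sum_univ_castSucc (n := d), Fin.cons_zero, Fin.cons_succ, Fin.snoc_castSucc,
    Fin.snoc_last, Fin.succ_castSucc, Fin.succ_last]
  conv_rhs => rw [mul_sub, mul_add, Finset.mul_sum]
  simp only [mul_assoc]
  ring

lemma hartenWhat_momentum (U : Fin (d + 2) → ℝ) (k : Fin d) :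
    hartenWhat d γ α U (Fin.castSucc (Fin.succ k)) =
      U 0 / pOf d γ U * (pOf d γ U * U 0 ^ (-γ)) ^ (1 / (α + γ)) * vOf d U k := by
  simp only [hartenWhat, hartenW, ← Fin.succ_castSucc, Fin.cons_succ, Fin.snoc_castSucc]

lemma hartenWhat_last (U : Fin (d + 2) → ℝ) :
    hartenWhat d γ α U (Fin.last (d + 1)) =
      -(U 0 / pOf d γ U * (pOf d γ U * U 0 ^ (-γ)) ^ (1 / (α + γ))) := by
  simp only [hartenWhat, hartenW, ← Fin.succ_last, Fin.cons_succ, Fin.snoc_last]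
  ring

lemma hartenWhat_dotProduct_self_add (hβ : β = -(γ + α) / (γ - 1)) (hγ : γ ≠ 1)
    {U : Fin (d + 2) → ℝ} (hρ : U 0 ≠ 0) (hp : pOf d γ U ≠ 0) :
    hartenWhat d γ α U ⬝ᵥ U + pOf d γ U * hartenWhat d γ α U (Fin.last (d + 1)) =
      hartenSHat d γ α β U := by
  have hm : ∑ k, vOf d U k * U (Fin.castSucc (Fin.succ k)) = (∑ k, vOf d U k ^ 2) * U 0 := by
    simp only [Finset.sum_mul, vOf]
    exact Finset.sum_congr rfl fun k _ => by field_simp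
  have hγ' : γ - 1 ≠ 0 := sub_ne_zero.mpr hγ
  rw [hartenWhat_dotProduct, hartenWhat_last, hm, energy_eq hγ hρ, hartenSHat, hartenS, hβ]
  field_simp
  ring

lemma fderiv_hartenSHat_apply (hβ : β = -(γ + α) / (γ - 1)) (hαγ : α + γ ≠ 0) (hγ : γ ≠ 1)
    {U : Fin (d + 2) → ℝ} (hρ : 0 < U 0) (hp : 0 < pOf d γ U) (v : Fin (d + 2) → ℝ) :
    fderiv ℝ (hartenSHat d γ α β) U v = hartenWhat d γ α U ⬝ᵥ v := by
  have hline : HasLineDerivAt ℝ (hartenSHat d γ α β) (hartenWhat d γ α U ⬝ᵥ v) U v := by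
    refine ((hasDerivAt_add_smul_apply U v 0).hartenS (hasLineDerivAt_pOf hρ.ne' v)
      (by simpa using hρ) (by simpa using hp)).congr_deriv ?_
    have hγ' : γ - 1 ≠ 0 := sub_ne_zero.mpr hγ
    simp only [zero_smul, add_zero]
    rw [hartenWhat_dotProduct, hartenS, hβ]
    field_simp
    ring
  exact ((differentiableAt_hartenSHat hρ hp).hasFDerivAt.hasLineDerivAt v).unique hline

lemma fluxHat_eq (hγ : γ ≠ 1) {U : Fin (d + 2) → ℝ} (hρ : U 0 ≠ 0) (i : Fin d) :
    fluxHat d γ i U = vOf d U i • (U + pOf d γ U • Pi.single (Fin.last (d + 1)) 1)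
      + pOf d γ U • Pi.single (Fin.castSucc (Fin.succ i)) 1 := by
  funext j
  refine Fin.cases ?_ (fun j => Fin.lastCases ?_ (fun k => ?_) j) j
  · simp [fluxHat, eulerFlux, vOf]
    field_simp
  · simp [fluxHat, eulerFlux, energy_eq hγ hρ]
    ring
  · simp [fluxHat, eulerFlux, vOf, Pi.single_apply]
    field_simp

lemma fderiv_fluxHat_apply (hγ : γ ≠ 1) {U : Fin (d + 2) → ℝ} (hρ : U 0 ≠ 0) (i : Fin d)
    (v : Fin (d + 2) → ℝ) :
    fderiv ℝ (fluxHat d γ i) U v =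
      fderiv ℝ (fun U => vOf d U i) U v • (U + pOf d γ U • Pi.single (Fin.last (d + 1)) 1)
        + vOf d U i • (v + fderiv ℝ (pOf d γ) U v • Pi.single (Fin.last (d + 1)) 1)
        + fderiv ℝ (pOf d γ) U v • Pi.single (Fin.castSucc (Fin.succ i)) 1 := by
  have hV := (differentiableAt_vOf hρ i).hasFDerivAt
  have hp := (differentiableAt_pOf (γ := γ) hρ).hasFDerivAt
  have hsplit : fluxHat d γ i =ᶠ[𝓝 U] fun U =>
      vOf d U i • (U + pOf d γ U • Pi.single (Fin.last (d + 1)) 1)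
        + pOf d γ U • Pi.single (Fin.castSucc (Fin.succ i)) 1 :=
    ((continuous_apply 0).continuousAt.eventually_ne hρ).mono fun _ h => fluxHat_eq hγ h i
  rw [(((hV.smul ((hasFDerivAt_id U).add (hp.smul_const _))).add
    (hp.smul_const _)).congr_of_eventuallyEq hsplit).fderiv]
  simp only [add_apply, smul_apply,
    ContinuousLinearMap.smulRight_apply, ContinuousLinearMap.id_apply, Pi.add_apply, id_eq]
  abel

end

theorem hartenW_dot_flux_jacobian_eq_grad_entropyFlux_general
    (d : ℕ) (γ α β : ℝ) (hγ : 1 < γ) (hα : 0 < α ∨ α < -γ)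
    (hβ : β = -(γ + α) / (γ - 1))
    (U : Fin (d + 2) → ℝ) (hρ : 0 < U 0) (hp : 0 < pOf d γ U)
    (i : Fin d) (v : Fin (d + 2) → ℝ) :
    (∑ j, hartenWhat d γ α U j * fderiv ℝ (fluxHat d γ i) U v j)
      = fderiv ℝ (entropyFluxHat d γ α β i) U v := by
  have hγ' : γ ≠ 1 := hγ.ne'
  have hαγ : α + γ ≠ 0 := by
    rcases hα with h | h
    · exact (by linarith : 0 < α + γ).ne'
    · exact (by linarith : α + γ < 0).ne
  have hG : fderiv ℝ (entropyFluxHat d γ α β i) U v =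
      vOf d U i * fderiv ℝ (hartenSHat d γ α β) U v
        + hartenSHat d γ α β U * fderiv ℝ (fun U => vOf d U i) U v := by
    rw [show entropyFluxHat d γ α β i = fun U => vOf d U i * hartenSHat d γ α β U from rfl,
      fderiv_fun_mul (differentiableAt_vOf hρ.ne' i) (differentiableAt_hartenSHat hρ hp)]
    rfl
  change hartenWhat d γ α U ⬝ᵥ fderiv ℝ (fluxHat d γ i) U v = _
  rw [hG, fderiv_fluxHat_apply hγ' hρ.ne' i v, fderiv_hartenSHat_apply hβ hαγ hγ' hρ hp,
    ← hartenWhat_dotProduct_self_add hβ hγ' hρ.ne' hp.ne']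
  simp only [dotProduct_add, dotProduct_smul, dotProduct_single, smul_eq_mul,
    hartenWhat_momentum, hartenWhat_last]
  ring

/-- Under the Harten setup, for every conservative state `U` in
`D = {(ρ, m, e) : ρ > 0, (γ−1)(e − ‖m‖²/(2ρ)) > 0}`, every `i` and every direction
`v`: `⟨Ŵ(U), DF̂^(i)(U)·v⟩ = DĜ^(i)(U)·v`, i.e. the transpose of the Euler flux
Jacobian applied to Harten's entropy variables equals the gradient of the entropy
flux. -/
theorem hartenW_dot_flux_jacobian_eq_grad_entropyFlux
    (d : ℕ) (hd : 1 ≤ d) (γ α β : ℝ) (hγ : 1 < γ) (hα : 0 < α ∨ α < -γ)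
    (hβ : β = -(γ + α) / (γ - 1))
    (U : Fin (d + 2) → ℝ) (hρ : 0 < U 0) (hp : 0 < pOf d γ U)
    (i : Fin d) (v : Fin (d + 2) → ℝ) :
    (∑ j, hartenWhat d γ α U j * fderiv ℝ (fluxHat d γ i) U v j)
      = fderiv ℝ (entropyFluxHat d γ α β i) U v :=
  hartenW_dot_flux_jacobian_eq_grad_entropyFlux_general d γ α β hγ hα hβ U hρ hp i v
end

section
/- Let n, n_c, d ≥ 1 be integers and β a real number with β ≠ −1. Let H ∈ ℝ^{n×n} be diagonal with positive diagonal entries, E ∈ ℝ^{n×n} diagonal, and Q ∈ ℝ^{n×n} with Q + Q^T = E; set D = H^{−1}Q. Let Ā ∈ ℝ^{n·n_c × n·n_c} be block diagonal with symmetric n_c×n_c diagonal blocks Ā₁,…,Ā_n. Let w, f ∈ ℝ^{n·n_c} be concatenations of node vectors w_j, f_j ∈ ℝ^{n_c}, and ψ ∈ ℝ^n a vector, such that for each j ∈ {1,…,n}: Ā_j·w_j = β·f_j and ⟨w_j, f_j⟩ = (β+1)·ψ_j. Then: (β/(β+1))·w^T·H̄·D̄·f + (1/(β+1))·w^T·H̄·Ā·D̄·w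 = β·1^T·E·ψ, where H̄ = H ⊗ I_{n_c}, D̄ = D ⊗ I_{n_c}, and 1 is the all-ones vector in ℝ^n. -/
open Matrix

/-- `M̄ = M ⊗ I_{n_c}`: the Kronecker product of a matrix with the `nc × nc`
identity, indexed by pairs (node, component). -/
def blockMat {n m : ℕ} (nc : ℕ) (M : Matrix (Fin n) (Fin m) ℝ) :
    Matrix (Fin n × Fin nc) (Fin m × Fin nc) ℝ :=
  Matrix.of fun jp lq => M jp.1 lq.1 * (if jp.2 = lq.2 then 1 else 0)

/-- Concatenation of a node-state array into a vector of `ℝ^{n·n_c}`. -/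
def concatVec {n nc : ℕ} (u : Fin n → Fin nc → ℝ) : Fin n × Fin nc → ℝ :=
  fun jp => u jp.1 jp.2

/-- Block diagonal matrix with `nc × nc` diagonal blocks `Ab 1, …, Ab n`. -/
def blockDiagMat {n nc : ℕ} (Ab : Fin n → Matrix (Fin nc) (Fin nc) ℝ) :
    Matrix (Fin n × Fin nc) (Fin n × Fin nc) ℝ :=
  Matrix.of fun jp lq => if jp.1 = lq.1 then Ab jp.1 jp.2 lq.2 else 0

lemma blockMat_mulVec {n m nc : ℕ} (M : Matrix (Fin n) (Fin m) ℝ)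
    (x : Fin m × Fin nc → ℝ) (jp : Fin n × Fin nc) :
    (blockMat nc M *ᵥ x) jp = ∑ l, M jp.1 l * x (l, jp.2) := by
  simp [blockMat, Matrix.mulVec, dotProduct, Fintype.sum_prod_type,
    mul_ite, mul_one, mul_zero, ite_mul, zero_mul, mul_assoc]

lemma blockMat_diag_mulVec {n nc : ℕ} {H : Matrix (Fin n) (Fin n) ℝ}
    (hH : H.IsDiag) (x : Fin n × Fin nc → ℝ) (jp : Fin n × Fin nc) :
    (blockMat nc H *ᵥ x) jp = H jp.1 jp.1 * x jp := by
  rw [blockMat_mulVec]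
  exact Finset.sum_eq_single jp.1
    (fun m _ hm => by rw [hH (Ne.symm hm), zero_mul]) (by simp)

lemma blockDiagMat_mulVec {n nc : ℕ} (Ab : Fin n → Matrix (Fin nc) (Fin nc) ℝ)
    (x : Fin n × Fin nc → ℝ) (jp : Fin n × Fin nc) :
    (blockDiagMat Ab *ᵥ x) jp = ∑ q, Ab jp.1 jp.2 q * x (jp.1, q) := by
  simp [blockDiagMat, Matrix.mulVec, dotProduct, Fintype.sum_prod_type,
    ite_mul, zero_mul]


/-- **Volume-term lemma for the entropy-split discretization.** With `H` diagonal
positive, `E` diagonal, `Q + Qᵀ = E`, `D = H⁻¹Q`, block diagonal `Ā` with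
symmetric blocks, and node relations `Ā_j w_j = β f_j`, `⟨w_j, f_j⟩ = (β+1) ψ_j`:
`(β/(β+1))·wᵀ H̄ D̄ f + (1/(β+1))·wᵀ H̄ Ā D̄ w = β·1ᵀ E ψ`. -/
theorem entropy_split_volume_term
    (n nc d : ℕ) (hn : 1 ≤ n) (hnc : 1 ≤ nc) (hd : 1 ≤ d)
    (β : ℝ) (hβ : β ≠ -1)
    (H E Q : Matrix (Fin n) (Fin n) ℝ)
    (hHdiag : H.IsDiag) (hHpos : ∀ j, 0 < H j j) (hEdiag : E.IsDiag)
    (hQ : Q + Qᵀ = E)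
    (Ab : Fin n → Matrix (Fin nc) (Fin nc) ℝ) (hAb : ∀ j, (Ab j).IsSymm)
    (wn fn : Fin n → Fin nc → ℝ) (ψ : Fin n → ℝ)
    (hhom : ∀ j, (Ab j) *ᵥ wn j = β • fn j)
    (hpot : ∀ j, wn j ⬝ᵥ fn j = (β + 1) * ψ j) :
    (β / (β + 1)) *
        (concatVec wn ⬝ᵥ (blockMat nc H *ᵥ (blockMat nc (H⁻¹ * Q) *ᵥ concatVec fn)))
      + (1 / (β + 1)) *
        (concatVec wn ⬝ᵥ (blockMat nc H *ᵥ
          (blockDiagMat Ab *ᵥ (blockMat nc (H⁻¹ * Q) *ᵥ concatVec wn))))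
      = β * ((1 : Fin n → ℝ) ⬝ᵥ (E *ᵥ ψ)) := by

  have hβ1 : β + 1 ≠ 0 := fun h => hβ (by linarith)
  have hdet : IsUnit H.det := by
    rw [← hHdiag.diagonal_diag, Matrix.det_diagonal]
    exact (Finset.prod_pos fun j _ => hHpos j).ne'.isUnit
  have hmul : ∀ (X : Matrix (Fin n) (Fin n) ℝ) (j l : Fin n),
      (H * X) j l = H j j * X j l := by
    intro X j l
    rw [Matrix.mul_apply]
    exact Finset.sum_eq_single j
      (fun m _ hm => by rw [hHdiag (Ne.symm hm), zero_mul]) (by simp)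
  have hHQ : ∀ j l, H j j * (H⁻¹ * Q) j l = Q j l := by
    intro j l
    have h1 : H * (H⁻¹ * Q) = Q := by
      rw [← mul_assoc, Matrix.mul_nonsing_inv _ hdet, one_mul]
    rw [← hmul, h1]
  have hAw : ∀ j q, ∑ p, Ab j p q * wn j p = β * fn j q := by
    intro j q
    have h := congrFun (hhom j) q
    simp only [Matrix.mulVec, dotProduct, Pi.smul_apply, smul_eq_mul] at h
    rw [← h]
    exact Finset.sum_congr rfl fun p _ => by rw [(hAb j).apply p q]
  have term1 : concatVec wn ⬝ᵥ (blockMat nc H *ᵥ (blockMat nc (H⁻¹ * Q) *ᵥ concatVec fn))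
      = ∑ j, ∑ l, Q j l * (wn j ⬝ᵥ fn l) := by
    simp only [dotProduct, Fintype.sum_prod_type,
      blockMat_diag_mulVec hHdiag, blockMat_mulVec, concatVec, Finset.mul_sum]
    refine Finset.sum_congr rfl fun j _ => ?_
    rw [Finset.sum_comm]
    refine Finset.sum_congr rfl fun l _ => Finset.sum_congr rfl fun p _ => ?_
    rw [← hHQ j l]; ring
  have term2 : concatVec wn ⬝ᵥ (blockMat nc H *ᵥ
        (blockDiagMat Ab *ᵥ (blockMat nc (H⁻¹ * Q) *ᵥ concatVec wn)))
      = ∑ j, ∑ l, β * Q j l * (fn j ⬝ᵥ wn l) := by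
    simp only [dotProduct, Fintype.sum_prod_type,
      blockMat_diag_mulVec hHdiag, blockDiagMat_mulVec, blockMat_mulVec,
      concatVec, Finset.mul_sum]
    refine Finset.sum_congr rfl fun j _ => ?_
    -- LHS : ∑ p, ∑ q, ∑ l, wn j p * (H j j * (Ab j p q * ((H⁻¹*Q) j l * wn l q)))
    rw [Finset.sum_comm]
    calc ∑ q, ∑ p, ∑ l, wn j p * (H j j * (Ab j p q * ((H⁻¹ * Q) j l * wn l q)))
        = ∑ q, ∑ l, ∑ p, wn j p * (H j j * (Ab j p q * ((H⁻¹ * Q) j l * wn l q))) :=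
          Finset.sum_congr rfl fun q _ => Finset.sum_comm
      _ = ∑ l, ∑ q, ∑ p, wn j p * (H j j * (Ab j p q * ((H⁻¹ * Q) j l * wn l q))) :=
          Finset.sum_comm
      _ = ∑ l, ∑ q, β * Q j l * (fn j q * wn l q) := by
          refine Finset.sum_congr rfl fun l _ => Finset.sum_congr rfl fun q _ => ?_
          have : ∑ p, wn j p * (H j j * (Ab j p q * ((H⁻¹ * Q) j l * wn l q)))
              = (∑ p, Ab j p q * wn j p) * (H j j * ((H⁻¹ * Q) j l * wn l q)) := by
            rw [Finset.sum_mul]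
            exact Finset.sum_congr rfl fun p _ => by ring
          rw [this, hAw, ← mul_assoc (H j j), hHQ]
          ring
  have hEjl : ∀ j l, Q j l + Q l j = E j l := fun j l => by
    have := congrFun (congrFun hQ j) l
    simpa using this
  rw [term1, term2]
  have rhs : (1 : Fin n → ℝ) ⬝ᵥ (E *ᵥ ψ) = ∑ j, E j j * ψ j := by
    simp only [dotProduct, Matrix.mulVec, Pi.one_apply, one_mul]
    exact Finset.sum_congr rfl fun j _ => Finset.sum_eq_single j
      (fun l _ hl => by rw [hEdiag (Ne.symm hl), zero_mul]) (by simp)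
  rw [rhs]
  have swap2 : ∑ j, ∑ l, β * Q j l * (fn j ⬝ᵥ wn l)
      = ∑ j, ∑ l, β * Q l j * (wn j ⬝ᵥ fn l) := by
    rw [Finset.sum_comm]
    exact Finset.sum_congr rfl fun j _ => Finset.sum_congr rfl fun l _ => by
      rw [dotProduct_comm]
  rw [swap2]
  simp only [Finset.mul_sum, ← Finset.sum_add_distrib]
  refine Finset.sum_congr rfl fun j _ => ?_
  have : ∀ l, β / (β + 1) * (Q j l * (wn j ⬝ᵥ fn l))
      + 1 / (β + 1) * (β * Q l j * (wn j ⬝ᵥ fn l))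
      = (β / (β + 1)) * (E j l * (wn j ⬝ᵥ fn l)) := by
    intro l
    rw [← hEjl j l]
    field_simp
  rw [Finset.sum_congr rfl fun l _ => this l]
  rw [Finset.sum_eq_single j
    (fun l _ hl => by rw [hEdiag (Ne.symm hl), zero_mul, mul_zero]) (by simp)]
  rw [hpot j]
  field_simp
end

section
/- Let q, r_k, r_v ≥ 1 be integers. Let B, T1, T2k, T2v, T3k, T3v ∈ ℝ^{q×q} be symmetric matrices satisfying: T3k + T2k = B, T3v + T2v = B, T3v = T2k, T3k = T2v, and T1 positive semidefinite. Let C_k ∈ ℝ^{q×r_k}, C_v ∈ ℝ^{q×r_v} be arbitrary matrices, H_k ∈ ℝ^{r_k×r_k} and H_v ∈ ℝ^{r_v×r_v} symmetric positive semidefinite, and α_k, α_v ≥ 0 real. Define the block matrix M = [[T1, −T1, (T3k − B)·C_k, T3k·C_v], [−T1, T1, T3v·C_k, (T3v − B)·C_v], [C_k^T·T2k, −C_k^T·T2k, α_k·H_k, 0], [−C_v^T·T2v, C_v^T·T2v, 0, α_v·H_v]]. Then for all a, b ∈ ℝ^q, c ∈ ℝ^{r_k}, d ∈ ℝ^{r_v},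 the quadratic form satisfies (a, b, c, d)^T·M·(a, b, c, d) = (a − b)^T·T1·(a − b) + α_k·c^T·H_k·c + α_v·d^T·H_v·d ≥ 0; in particular M + M^T is positive semidefinite. -/
/-!
The entropy-stability conditions give `T3k - B = -T2k`, `T3v - B = -T2v`, `T3k = T2v` and
`T3v = T2k`, so with `T2k`, `T2v` symmetric the upper-right coupling block of `M` is minus the
transpose of the lower-left one. A skew coupling contributes nothing to a quadratic form, which
therefore splits into the jump term `(a - b)ᵀ T1 (a - b)` and the two diagonal terms
`α cᵀ H c`, each nonnegative. Nonnegativity of `xᵀ M x` for all `x` gives positive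
semidefiniteness of `M + Mᵀ`.
-/

open Matrix

namespace Matrix

variable {m n R : Type*} [Fintype m] [Fintype n]

theorem sumElim_dotProduct_fromBlocks_mulVec_sumElim [NonUnitalNonAssocSemiring R]
    (A : Matrix m m R) (B : Matrix m n R) (C : Matrix n m R) (D : Matrix n n R)
    (x : m → R) (y : n → R) :
    Sum.elim x y ⬝ᵥ (fromBlocks A B C D *ᵥ Sum.elim x y)
      = x ⬝ᵥ (A *ᵥ x) + x ⬝ᵥ (B *ᵥ y) + (y ⬝ᵥ (C *ᵥ x) + y ⬝ᵥ (D *ᵥ y)) := by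
  simp only [fromBlocks_mulVec, Sum.elim_comp_inl, Sum.elim_comp_inr, sumElim_dotProduct_sumElim,
    dotProduct_add]

theorem sumElim_dotProduct_fromBlocks_neg_transpose_mulVec_sumElim [CommRing R]
    (A : Matrix m m R) (L : Matrix n m R) (D : Matrix n n R) (x : m → R) (y : n → R) :
    Sum.elim x y ⬝ᵥ (fromBlocks A (-Lᵀ) L D *ᵥ Sum.elim x y)
      = x ⬝ᵥ (A *ᵥ x) + y ⬝ᵥ (D *ᵥ y) := by
  rw [sumElim_dotProduct_fromBlocks_mulVec_sumElim, neg_mulVec, dotProduct_neg,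
    dotProduct_transpose_mulVec]
  abel

theorem sumElim_dotProduct_fromBlocks_neg_neg_mulVec_sumElim [Ring R]
    (T : Matrix m m R) (a b : m → R) :
    Sum.elim a b ⬝ᵥ (fromBlocks T (-T) (-T) T *ᵥ Sum.elim a b) = (a - b) ⬝ᵥ (T *ᵥ (a - b)) := by
  rw [sumElim_dotProduct_fromBlocks_mulVec_sumElim]
  simp only [neg_mulVec, dotProduct_neg, mulVec_sub, dotProduct_sub, sub_dotProduct]
  abel

theorem sumElim_dotProduct_fromBlocks_smul_zero_zero_smul_mulVec_sumElim [CommRing R]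
    (α β : R) (H : Matrix m m R) (G : Matrix n n R) (c : m → R) (d : n → R) :
    Sum.elim c d ⬝ᵥ (fromBlocks (α • H) 0 0 (β • G) *ᵥ Sum.elim c d)
      = α * (c ⬝ᵥ (H *ᵥ c)) + β * (d ⬝ᵥ (G *ᵥ d)) := by
  simp [sumElim_dotProduct_fromBlocks_mulVec_sumElim, smul_mulVec, dotProduct_smul]

theorem posSemidef_add_transpose_of_dotProduct_mulVec_nonneg [CommRing R] [PartialOrder R]
    [StarRing R] [TrivialStar R] [IsOrderedRing R] {M : Matrix n n R}
    (hM : ∀ x, 0 ≤ x ⬝ᵥ (M *ᵥ x)) : (M + Mᵀ).PosSemidef := by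
  refine posSemidef_iff_dotProduct_mulVec.2
    ⟨isHermitian_iff_isSymm.2 (isSymm_add_transpose_self M), fun x => ?_⟩
  rw [star_trivial, add_mulVec, dotProduct_add, dotProduct_transpose_mulVec]
  exact add_nonneg (hM x) (hM x)

theorem PosSemidef.dotProduct_mulVec_nonneg_of_trivialStar [Ring R] [PartialOrder R]
    [StarRing R] [TrivialStar R] {M : Matrix n n R} (hM : M.PosSemidef) (x : n → R) :
    0 ≤ x ⬝ᵥ (M *ᵥ x) := by
  simpa using hM.dotProduct_mulVec_nonneg x

end Matrix

theorem viscous_coupling_eq_neg_transpose {m n o R : Type*} [Fintype m] [CommRing R]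
    (B T2k T2v T3k T3v : Matrix m m R) (hT2k : T2k.IsSymm) (hT2v : T2v.IsSymm)
    (hc1 : T3k + T2k = B) (hc2 : T3v + T2v = B) (hc3 : T3v = T2k) (hc4 : T3k = T2v)
    (Ck : Matrix m n R) (Cv : Matrix m o R) :
    fromBlocks ((T3k - B) * Ck) (T3k * Cv) (T3v * Ck) ((T3v - B) * Cv)
      = -(fromBlocks (Ckᵀ * T2k) (-(Ckᵀ * T2k)) (-(Cvᵀ * T2v)) (Cvᵀ * T2v))ᵀ := by
  have hk : T3k - B = -T2k := by rw [← hc1, hc4]; abel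
  have hv : T3v - B = -T2v := by rw [← hc2, hc3]; abel
  rw [hk, hv, hc3, hc4]
  simp [fromBlocks_transpose, fromBlocks_neg, transpose_mul, hT2k.eq, hT2v.eq]


theorem viscous_sat_interface_matrix_psd_general
    (q rk rv : ℕ)
    (B T1 T2k T2v T3k T3v : Matrix (Fin q) (Fin q) ℝ)
    (hT2k : T2k.IsSymm) (hT2v : T2v.IsSymm)
    (hc1 : T3k + T2k = B) (hc2 : T3v + T2v = B) (hc3 : T3v = T2k) (hc4 : T3k = T2v)
    (hT1psd : T1.PosSemidef)
    (Ck : Matrix (Fin q) (Fin rk) ℝ) (Cv : Matrix (Fin q) (Fin rv) ℝ)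
    (Hk : Matrix (Fin rk) (Fin rk) ℝ) (Hv : Matrix (Fin rv) (Fin rv) ℝ)
    (hHk : Hk.PosSemidef) (hHv : Hv.PosSemidef)
    (αk αv : ℝ) (hαk : 0 ≤ αk) (hαv : 0 ≤ αv)
    (M : Matrix ((Fin q ⊕ Fin q) ⊕ (Fin rk ⊕ Fin rv))
          ((Fin q ⊕ Fin q) ⊕ (Fin rk ⊕ Fin rv)) ℝ)
    (hM : M = Matrix.fromBlocks
      (Matrix.fromBlocks T1 (-T1) (-T1) T1)
      (Matrix.fromBlocks ((T3k - B) * Ck) (T3k * Cv) (T3v * Ck) ((T3v - B) * Cv))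
      (Matrix.fromBlocks (Ckᵀ * T2k) (-(Ckᵀ * T2k)) (-(Cvᵀ * T2v)) (Cvᵀ * T2v))
      (Matrix.fromBlocks (αk • Hk) 0 0 (αv • Hv))) :
    (∀ (a b : Fin q → ℝ) (c : Fin rk → ℝ) (d : Fin rv → ℝ),
      Sum.elim (Sum.elim a b) (Sum.elim c d) ⬝ᵥ
          (M *ᵥ Sum.elim (Sum.elim a b) (Sum.elim c d))
        = (a - b) ⬝ᵥ (T1 *ᵥ (a - b)) + αk * (c ⬝ᵥ (Hk *ᵥ c)) + αv * (d ⬝ᵥ (Hv *ᵥ d))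
      ∧ 0 ≤ Sum.elim (Sum.elim a b) (Sum.elim c d) ⬝ᵥ
          (M *ᵥ Sum.elim (Sum.elim a b) (Sum.elim c d)))
    ∧ (M + Mᵀ).PosSemidef := by
  have hquad : ∀ (a b : Fin q → ℝ) (c : Fin rk → ℝ) (d : Fin rv → ℝ),
      Sum.elim (Sum.elim a b) (Sum.elim c d) ⬝ᵥ (M *ᵥ Sum.elim (Sum.elim a b) (Sum.elim c d))
        = (a - b) ⬝ᵥ (T1 *ᵥ (a - b)) + αk * (c ⬝ᵥ (Hk *ᵥ c)) + αv * (d ⬝ᵥ (Hv *ᵥ d)) := by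
    intro a b c d
    rw [hM, viscous_coupling_eq_neg_transpose B T2k T2v T3k T3v hT2k hT2v hc1 hc2 hc3 hc4,
      sumElim_dotProduct_fromBlocks_neg_transpose_mulVec_sumElim,
      sumElim_dotProduct_fromBlocks_neg_neg_mulVec_sumElim,
      sumElim_dotProduct_fromBlocks_smul_zero_zero_smul_mulVec_sumElim, add_assoc]
  have hnonneg : ∀ (a b : Fin q → ℝ) (c : Fin rk → ℝ) (d : Fin rv → ℝ),
      0 ≤ Sum.elim (Sum.elim a b) (Sum.elim c d) ⬝ᵥ
        (M *ᵥ Sum.elim (Sum.elim a b) (Sum.elim c d)) := by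
    intro a b c d
    rw [hquad]
    have := hT1psd.dotProduct_mulVec_nonneg_of_trivialStar (a - b)
    have := hHk.dotProduct_mulVec_nonneg_of_trivialStar c
    have := hHv.dotProduct_mulVec_nonneg_of_trivialStar d
    positivity
  refine ⟨fun a b c d => ⟨hquad a b c d, hnonneg a b c d⟩,
    posSemidef_add_transpose_of_dotProduct_mulVec_nonneg fun x => ?_⟩
  simpa only [Sum.elim_comp_inl_inr] using hnonneg ((x ∘ Sum.inl) ∘ Sum.inl)
    ((x ∘ Sum.inl) ∘ Sum.inr) ((x ∘ Sum.inr) ∘ Sum.inl) ((x ∘ Sum.inr) ∘ Sum.inr)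

/-- **Entropy stability of the viscous SAT interface matrix.** Under the stated
conditions on the symmetric penalty matrices `T1, T2k, T2v, T3k, T3v` and the
facet quadrature matrix `B`, the quadratic form of the viscous interface block
matrix `M` reduces to `(a−b)ᵀT1(a−b) + α_k cᵀH_k c + α_v dᵀH_v d ≥ 0`; in
particular `M + Mᵀ` is positive semidefinite. -/
theorem viscous_sat_interface_matrix_psd
    (q rk rv : ℕ) (hq : 1 ≤ q) (hrk : 1 ≤ rk) (hrv : 1 ≤ rv)
    (B T1 T2k T2v T3k T3v : Matrix (Fin q) (Fin q) ℝ)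
    (hB : B.IsSymm) (hT1 : T1.IsSymm) (hT2k : T2k.IsSymm) (hT2v : T2v.IsSymm)
    (hT3k : T3k.IsSymm) (hT3v : T3v.IsSymm)
    (hc1 : T3k + T2k = B) (hc2 : T3v + T2v = B) (hc3 : T3v = T2k) (hc4 : T3k = T2v)
    (hT1psd : T1.PosSemidef)
    (Ck : Matrix (Fin q) (Fin rk) ℝ) (Cv : Matrix (Fin q) (Fin rv) ℝ)
    (Hk : Matrix (Fin rk) (Fin rk) ℝ) (Hv : Matrix (Fin rv) (Fin rv) ℝ)
    (hHk : Hk.PosSemidef) (hHv : Hv.PosSemidef)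
    (αk αv : ℝ) (hαk : 0 ≤ αk) (hαv : 0 ≤ αv)
    (M : Matrix ((Fin q ⊕ Fin q) ⊕ (Fin rk ⊕ Fin rv))
          ((Fin q ⊕ Fin q) ⊕ (Fin rk ⊕ Fin rv)) ℝ)
    (hM : M = Matrix.fromBlocks
      (Matrix.fromBlocks T1 (-T1) (-T1) T1)
      (Matrix.fromBlocks ((T3k - B) * Ck) (T3k * Cv) (T3v * Ck) ((T3v - B) * Cv))
      (Matrix.fromBlocks (Ckᵀ * T2k) (-(Ckᵀ * T2k)) (-(Cvᵀ * T2v)) (Cvᵀ * T2v))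
      (Matrix.fromBlocks (αk • Hk) 0 0 (αv • Hv))) :
    (∀ (a b : Fin q → ℝ) (c : Fin rk → ℝ) (d : Fin rv → ℝ),
      Sum.elim (Sum.elim a b) (Sum.elim c d) ⬝ᵥ
          (M *ᵥ Sum.elim (Sum.elim a b) (Sum.elim c d))
        = (a - b) ⬝ᵥ (T1 *ᵥ (a - b)) + αk * (c ⬝ᵥ (Hk *ᵥ c)) + αv * (d ⬝ᵥ (Hv *ᵥ d))
      ∧ 0 ≤ Sum.elim (Sum.elim a b) (Sum.elim c d) ⬝ᵥ
          (M *ᵥ Sum.elim (Sum.elim a b) (Sum.elim c d)))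
    ∧ (M + Mᵀ).PosSemidef :=
  viscous_sat_interface_matrix_psd_general q rk rv B T1 T2k T2v T3k T3v hT2k hT2v hc1 hc2 hc3 hc4
    hT1psd Ck Cv Hk Hv hHk hHv αk αv hαk hαv M hM
end
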